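/- (Theorem B.3) Let λ ∈ (0, 1), let (Ω, P) be a probability space, and let (μ̂_n)_{n≥1} be a sequence of integrable real random variables on Ω with E[μ̂_k] = μ_k for each k ≥ 1, where (μ_k)_{k≥1} are real numbers. Define the random sequences κ₀ = 0, p̃₀ = 0, κ_{n+1} = λ · κ_n + 1, and p̃_{n+1} = p̃_n + (μ̂_{n+1} − p̃_n) / κ_{n+1}. Then for every n ≥ 1, p̃_n is integrable and E[p̃_n] = (Σ_{m=0}^{n-1} λ^m · μ_{n-m}) / (Σ_{m=0}^{n-1} λ^m). -/

import Mathlib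

/-!
Unrolling `κ (n+1) = λ κ n + 1` gives `κ n = ∑_{m<n} λ^m`, and multiplying the update of `p̃` by
`κ (n+1)` turns it into the linear recurrence `κ (n+1) p̃ (n+1) = λ (κ n p̃ n) + μ̂ (n+1)`, so
`κ n p̃ n = ∑_{m<n} λ^m μ̂ (n-m)`. Since `κ n` is deterministic and positive, `p̃ n` is a fixed linear
combination of the `μ̂ k`, and linearity of expectation finishes the proof.
-/

open Finset

theorem eq_sum_pow_mul_of_succ_eq {R : Type*} [CommSemiring R] (l : R) (a x : ℕ → R)
    (h0 : x 0 = 0) (hs : ∀ n, x (n + 1) = l * x n + a (n + 1)) (n : ℕ) :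
    x n = ∑ m ∈ range n, l ^ m * a (n - m) := by
  induction n with
  | zero => simp [h0]
  | succ n ih =>
    rw [hs, ih, sum_range_succ', mul_sum]
    simp only [pow_succ', mul_assoc, Nat.add_sub_add_right, pow_zero, one_mul, Nat.sub_zero]

open MeasureTheory

theorem integrable_sum_pow_mul {Ω : Type*} [MeasurableSpace Ω] {P : Measure Ω} (l : ℝ)
    {X : ℕ → Ω → ℝ} (hX : ∀ k, 1 ≤ k → Integrable (X k) P) (n : ℕ) :
    ∀ m ∈ range n, Integrable (fun ω ↦ l ^ m * X (n - m) ω) P := fun m hm ↦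
  (hX (n - m) (by grind)).const_mul _

theorem ptilde_expectation_general {Ω : Type*} [MeasurableSpace Ω]
    (P : Measure Ω)
    (l : ℝ) (hl0 : 0 < l)
    (μhat : ℕ → Ω → ℝ) (μs : ℕ → ℝ)
    (hint : ∀ k, 1 ≤ k → Integrable (μhat k) P)
    (hmean : ∀ k, 1 ≤ k → (∫ ω, μhat k ω ∂P) = μs k)
    (κ : ℕ → ℝ) (p : ℕ → Ω → ℝ)
    (hκ0 : κ 0 = 0) (hκ : ∀ n, κ (n + 1) = l * κ n + 1)
    (hp : ∀ n ω, p (n + 1) ω = p n ω + (μhat (n + 1) ω - p n ω) / κ (n + 1)) :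
    ∀ n, 1 ≤ n → Integrable (p n) P ∧
      (∫ ω, p n ω ∂P) = (∑ m ∈ Finset.range n, l ^ m * μs (n - m)) /
        (∑ m ∈ Finset.range n, l ^ m) := by
  have hκ_eq (n : ℕ) : κ n = ∑ m ∈ range n, l ^ m := by
    simpa using eq_sum_pow_mul_of_succ_eq l 1 κ hκ0 (by simpa using hκ) n
  have hκ_ne (n : ℕ) (hn : n ≠ 0) : κ n ≠ 0 := hκ_eq n ▸ (geom_sum_pos hl0.le hn).ne'
  have hκp_eq (n : ℕ) (ω : Ω) : κ n * p n ω = ∑ m ∈ range n, l ^ m * μhat (n - m) ω := by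
    refine eq_sum_pow_mul_of_succ_eq l (μhat · ω) (fun k ↦ κ k * p k ω) (by simp [hκ0])
      (fun k ↦ ?_) n
    rw [hp, mul_add, mul_div_cancel₀ _ (hκ_ne _ k.succ_ne_zero), hκ]
    ring
  intro n hn
  have hp_eq : p n = fun ω ↦ (∑ m ∈ range n, l ^ m * μhat (n - m) ω) / κ n := by
    ext ω
    rw [← hκp_eq, mul_div_cancel_left₀ _ (hκ_ne n (by omega))]
  have hint_sum := integrable_sum_pow_mul l hint n
  refine ⟨hp_eq ▸ (integrable_finsetSum _ hint_sum).div_const _, ?_⟩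
  rw [hp_eq, integral_div, integral_finsetSum _ hint_sum, hκ_eq]
  congr 1
  refine sum_congr rfl fun m hm ↦ ?_
  rw [integral_const_mul, hmean _ (by grind)]

/-- Theorem B.3: under the TDClip recursion driven by integrable random batch
estimates `μ̂_k` with `E[μ̂_k] = μ_k`, each `p̃_n` (for `n ≥ 1`) is integrable and
`E[p̃_n] = (∑_{m=0}^{n-1} λ^m · μ_{n-m}) / (∑_{m=0}^{n-1} λ^m)`. -/
theorem ptilde_expectation {Ω : Type*} [MeasurableSpace Ω]
    (P : Measure Ω) [IsProbabilityMeasure P]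
    (l : ℝ) (hl0 : 0 < l) (hl1 : l < 1)
    (μhat : ℕ → Ω → ℝ) (μs : ℕ → ℝ)
    (hint : ∀ k, 1 ≤ k → Integrable (μhat k) P)
    (hmean : ∀ k, 1 ≤ k → (∫ ω, μhat k ω ∂P) = μs k)
    (κ : ℕ → ℝ) (p : ℕ → Ω → ℝ)
    (hκ0 : κ 0 = 0) (hκ : ∀ n, κ (n + 1) = l * κ n + 1)
    (hp0 : ∀ ω, p 0 ω = 0)
    (hp : ∀ n ω, p (n + 1) ω = p n ω + (μhat (n + 1) ω - p n ω) / κ (n + 1)) :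
    ∀ n, 1 ≤ n → Integrable (p n) P ∧
      (∫ ω, p n ω ∂P) = (∑ m ∈ Finset.range n, l ^ m * μs (n - m)) /
        (∑ m ∈ Finset.range n, l ^ m) :=
  ptilde_expectation_general P l hl0 μhat μs hint hmean κ p hκ0 hκ hp
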